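/- arXiv:2104.10537 — 2 statements merged into one kernel-verified Lean document; each statement's English description precedes it below -/
import Mathlib

section
/- Fix t > 0 and 0 ≤ x₁ < x₂. If y₁ is any minimizer of y ↦ F(y,x₁,t) over [0,∞) and y₂ is any minimizer of y ↦ F(y,x₂,t) over [0,∞), then y₁ ≤ y₂. In particular, y_*(x,t) and y^*(x,t) are monotonically increasing in x for fixed t, and y^*(x₁,t) ≤ y_*(x₂,t). -/
open MeasureTheory Set Filter

noncomputable def Fpot (ρ0 u0 : ℝ → ℝ) (y x t : ℝ) : ℝ :=
  ∫ η in (0:ℝ)..y, (t * u0 η + η - x) * ρ0 η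

noncomputable def Gpot (ρb ub : ℝ → ℝ) (τ x t : ℝ) : ℝ :=
  ∫ η in (0:ℝ)..τ, (x - ub η * (t - η)) * (ρb η * ub η)

/-- `a` minimizes `f` over `[0, ∞)`. -/
def MinimizesOn (f : ℝ → ℝ) (a : ℝ) : Prop :=
  0 ≤ a ∧ ∀ b, 0 ≤ b → f a ≤ f b

/-- `a` is the smallest minimizer of `f` over `[0, ∞)`. -/
def SmallestMinimizer (f : ℝ → ℝ) (a : ℝ) : Prop :=
  MinimizesOn f a ∧ ∀ b, MinimizesOn f b → a ≤ b

/-- `a` is the largest minimizer of `f` over `[0, ∞)`. -/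
def LargestMinimizer (f : ℝ → ℝ) (a : ℝ) : Prop :=
  MinimizesOn f a ∧ ∀ b, MinimizesOn f b → b ≤ a

/-- `v` is the (attained) minimum value of `f` over `[0, ∞)`. -/
def IsMinValue (f : ℝ → ℝ) (v : ℝ) : Prop :=
  (∃ a, 0 ≤ a ∧ f a = v) ∧ ∀ b, 0 ≤ b → v ≤ f b

/-!
For `0 ≤ y` the potential is affine in `x`:
`F(y,x,t) = ∫₀^y (t u₀ + η) ρ₀ - x ∫₀^y ρ₀`. Hence `y ↦ F(y,x₂,t) - F(y,x₁,t) = (x₁ - x₂) ∫₀^y ρ₀`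
is strictly decreasing because `ρ₀ > 0`, and a function with strictly decreasing increments
cannot move a minimizer to the left.
-/

lemma MinimizesOn.le_of_strictAntiOn_sub {f g : ℝ → ℝ} {y₁ y₂ : ℝ}
    (hfg : StrictAntiOn (fun y => g y - f y) (Ici 0))
    (hf : MinimizesOn f y₁) (hg : MinimizesOn g y₂) : y₁ ≤ y₂ := by
  by_contra! h
  have hlt : g y₁ - f y₁ < g y₂ - f y₂ := hfg hg.1 hf.1 h
  linarith [hf.2 y₂ hg.1, hg.2 y₁ hf.1]

lemma strictMonoOn_integral_of_pos {f : ℝ → ℝ}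
    (hf : ∀ y, 0 ≤ y → IntervalIntegrable f volume 0 y) (hpos : ∀ η, 0 < η → 0 < f η) :
    StrictMonoOn (fun y => ∫ η in (0:ℝ)..y, f η) (Ici 0) := by
  intro a ha b hb hab
  have hsplit := intervalIntegral.integral_interval_sub_left (hf b hb) (hf a ha)
  have hpos_ab : 0 < ∫ η in a..b, f η :=
    intervalIntegral.intervalIntegral_pos_of_pos_on ((hf a ha).symm.trans (hf b hb))
      (fun η hη => hpos η (ha.trans_lt hη.1)) hab
  dsimp only
  linarith

lemma intervalIntegrable_of_nonneg_of_le {f : ℝ → ℝ} (hf : Measurable f) {a b M : ℝ}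
    (hab : a ≤ b) (h0 : ∀ η ∈ Ioc a b, 0 ≤ f η) (hM : ∀ η ∈ Ioc a b, f η ≤ M) :
    IntervalIntegrable f volume a b := by
  refine (intervalIntegrable_iff_integrableOn_Ioc_of_le hab).2 <|
    Measure.integrableOn_of_bounded measure_Ioc_lt_top.ne hf.aestronglyMeasurable
      (M := M) (ae_restrict_of_forall_mem measurableSet_Ioc fun η hη => ?_)
  rw [Real.norm_of_nonneg (h0 η hη)]
  exact hM η hη

lemma IntervalIntegrable.bdd_mul {f g : ℝ → ℝ} {a b C : ℝ} (hab : a ≤ b)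
    (hg : IntervalIntegrable g volume a b) (hf : Measurable f) (hC : ∀ η ∈ Ioc a b, |f η| ≤ C) :
    IntervalIntegrable (fun η => f η * g η) volume a b :=
  (intervalIntegrable_iff_integrableOn_Ioc_of_le hab).2 <|
    ((intervalIntegrable_iff_integrableOn_Ioc_of_le hab).1 hg).bdd_mul
      hf.aestronglyMeasurable (ae_restrict_of_forall_mem measurableSet_Ioc hC)

section Fpot

variable {ρ0 u0 : ℝ → ℝ} {t : ℝ}

lemma Fpot_eq_sub_mul {y : ℝ} (x : ℝ)
    (hg : IntervalIntegrable (fun η => (t * u0 η + η) * ρ0 η) volume 0 y)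
    (hρ : IntervalIntegrable ρ0 volume 0 y) :
    Fpot ρ0 u0 y x t = (∫ η in (0:ℝ)..y, (t * u0 η + η) * ρ0 η) - x * ∫ η in (0:ℝ)..y, ρ0 η := by
  rw [Fpot, ← intervalIntegral.integral_const_mul, ← intervalIntegral.integral_sub hg (hρ.const_mul x)]
  congr 1 with η
  ring

lemma strictAntiOn_Fpot_sub {x₁ x₂ : ℝ} (hx : x₁ < x₂)
    (hg : ∀ y, 0 ≤ y → IntervalIntegrable (fun η => (t * u0 η + η) * ρ0 η) volume 0 y)
    (hρ : ∀ y, 0 ≤ y → IntervalIntegrable ρ0 volume 0 y) (hpos : ∀ η, 0 < η → 0 < ρ0 η) :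
    StrictAntiOn (fun y => Fpot ρ0 u0 y x₂ t - Fpot ρ0 u0 y x₁ t) (Ici 0) := by
  have hmono := strictMonoOn_integral_of_pos hρ hpos
  intro a ha b hb hab
  simp only [Fpot_eq_sub_mul _ (hg _ ha) (hρ _ ha), Fpot_eq_sub_mul _ (hg _ hb) (hρ _ hb)]
  have := mul_lt_mul_of_pos_left (hmono ha hb hab) (sub_pos.2 hx)
  linarith

end Fpot

theorem stmt2_general
    (ρ0 u0 : ℝ → ℝ)
    (hρ0meas : Measurable ρ0) (hu0meas : Measurable u0)
    (hρ0pos : ∀ η, 0 ≤ η → 0 < ρ0 η)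
    (hρ0loc : ∀ K : ℝ, ∃ M : ℝ, ∀ η ∈ Set.Icc (0:ℝ) K, ρ0 η ≤ M)
    (hu0bdd : ∃ M : ℝ, ∀ η, 0 ≤ η → |u0 η| ≤ M)
    (t x₁ x₂ y₁ y₂ : ℝ)
    (hx : x₁ < x₂)
    (hy₁ : MinimizesOn (fun y => Fpot ρ0 u0 y x₁ t) y₁)
    (hy₂ : MinimizesOn (fun y => Fpot ρ0 u0 y x₂ t) y₂) :
    y₁ ≤ y₂ := by
  obtain ⟨Mu, hMu⟩ := hu0bdd
  have hρ : ∀ y, 0 ≤ y → IntervalIntegrable ρ0 volume 0 y := fun y hy =>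
    let ⟨M, hM⟩ := hρ0loc y
    intervalIntegrable_of_nonneg_of_le hρ0meas hy (fun η hη => (hρ0pos η hη.1.le).le)
      (fun η hη => hM η (Ioc_subset_Icc_self hη))
  have hg : ∀ y, 0 ≤ y → IntervalIntegrable (fun η => (t * u0 η + η) * ρ0 η) volume 0 y :=
    fun y hy => (hρ y hy).bdd_mul hy (by fun_prop) (C := |t| * Mu + y) fun η hη => by
      calc |t * u0 η + η| ≤ |t| * |u0 η| + |η| := by rw [← abs_mul]; exact abs_add_le _ _
        _ ≤ |t| * Mu + y := by
          gcongr
          · exact hMu η hη.1.le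
          · rw [abs_of_pos hη.1]; exact hη.2
  exact hy₁.le_of_strictAntiOn_sub
    (strictAntiOn_Fpot_sub hx hg hρ fun η hη => hρ0pos η hη.le) hy₂

theorem stmt2
    (ρ0 u0 ρb ub : ℝ → ℝ)
    (hρ0meas : Measurable ρ0) (hu0meas : Measurable u0)
    (hρbmeas : Measurable ρb) (hubmeas : Measurable ub)
    (hρ0pos : ∀ η, 0 ≤ η → 0 < ρ0 η)
    (hρbpos : ∀ η, 0 ≤ η → 0 < ρb η)
    (hubpos : ∀ η, 0 ≤ η → 0 < ub η)
    (hρ0loc : ∀ K : ℝ, ∃ M : ℝ, ∀ η ∈ Set.Icc (0:ℝ) K, ρ0 η ≤ M)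
    (hρbloc : ∀ K : ℝ, ∃ M : ℝ, ∀ η ∈ Set.Icc (0:ℝ) K, ρb η ≤ M)
    (hu0bdd : ∃ M : ℝ, ∀ η, 0 ≤ η → |u0 η| ≤ M)
    (hubbdd : ∃ M : ℝ, ∀ η, 0 ≤ η → |ub η| ≤ M)
    (t x₁ x₂ y₁ y₂ : ℝ)
    (ht : 0 < t) (hx₁ : 0 ≤ x₁) (hx : x₁ < x₂)
    (hy₁ : MinimizesOn (fun y => Fpot ρ0 u0 y x₁ t) y₁)
    (hy₂ : MinimizesOn (fun y => Fpot ρ0 u0 y x₂ t) y₂) :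
    y₁ ≤ y₂ :=
  stmt2_general ρ0 u0 hρ0meas hu0meas hρ0pos hρ0loc hu0bdd t x₁ x₂ y₁ y₂ hx hy₁ hy₂
end

section
/- Fix t > 0 and 0 ≤ x₁ < x₂. If G(x₁,t) = G(x₂,t), then G(x,t) = 0 for every x ∈ [x₁,x₂], and for every x ∈ (x₁,x₂] the point τ = 0 is the unique minimizer of τ ↦ G(τ,x,t) over [0,∞). -/
open MeasureTheory Set Filter

/-!
For fixed `τ` and `t`, `x ↦ G(τ,x,t)` is affine with slope `∫₀^τ ρ_b u_b`, which is positive for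
`τ > 0`. Hence `x ↦ G(x,t)` is nondecreasing, so it is constant on `[x₁,x₂]`. For `x ∈ (x₁,x₂]`, a
minimizer `τ > 0` of `G(·,x,t)` would give `G(τ,x₁,t) < G(τ,x,t) = G(x,t) = G(x₁,t)`, which is
impossible; so `τ = 0` is the only minimizer and `G(x,t) = G(0,x,t) = 0`.
-/

open scoped ENNReal

lemma IsMinValue.le_of_forall_le {f g : ℝ → ℝ} {a b : ℝ} (ha : IsMinValue f a)
    (hb : IsMinValue g b) (hfg : ∀ τ, 0 ≤ τ → f τ ≤ g τ) : a ≤ b := by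
  obtain ⟨⟨τ, hτ, rfl⟩, -⟩ := hb
  exact (ha.2 τ hτ).trans (hfg τ hτ)

lemma IsMinValue.apply_eq_of_minimizesOn {f : ℝ → ℝ} {v τ : ℝ} (hv : IsMinValue f v)
    (hτ : MinimizesOn f τ) : f τ = v := by
  obtain ⟨⟨a, ha, rfl⟩, hle⟩ := hv
  exact le_antisymm (hτ.2 a ha) (hle τ hτ.1)

lemma IsMinValue.minimizesOn_of_forall_minimizesOn_eq {f : ℝ → ℝ} {v τ₀ : ℝ}
    (hv : IsMinValue f v) (huniq : ∀ τ, MinimizesOn f τ → τ = τ₀) :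
    MinimizesOn f τ₀ ∧ f τ₀ = v := by
  obtain ⟨⟨a, ha, rfl⟩, hle⟩ := hv
  obtain rfl := huniq a ⟨ha, hle⟩
  exact ⟨⟨ha, hle⟩, rfl⟩

lemma IsMinValue.eq_zero_of_minimizesOn {f₁ f : ℝ → ℝ} {v τ : ℝ} (h₁ : IsMinValue f₁ v)
    (h : IsMinValue f v) (hlt : ∀ τ, 0 < τ → f₁ τ < f τ) (hτ : MinimizesOn f τ) : τ = 0 := by
  refine (hτ.1.eq_or_lt.resolve_right fun hτpos => ?_).symm
  have := hlt τ hτpos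
  linarith [h.apply_eq_of_minimizesOn hτ, h₁.2 τ hτ.1]

lemma memLp_top_restrict_of_abs_le {α : Type*} [MeasurableSpace α] {f : α → ℝ}
    (hf : Measurable f) {μ : Measure α} {s : Set α} (hs : MeasurableSet s) {C : ℝ}
    (hC : ∀ η ∈ s, |f η| ≤ C) : MemLp f ∞ (μ.restrict s) :=
  memLp_top_of_bound hf.aestronglyMeasurable C ((ae_restrict_iff' hs).2 (.of_forall hC))

section Gpot

variable {ρb ub : ℝ → ℝ}

@[simp]
lemma Gpot_zero (x t : ℝ) : Gpot ρb ub 0 x t = 0 := by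
  simp [Gpot]

lemma intervalIntegrable_Gpot_integrand (hρb : Measurable ρb) (hub : Measurable ub)
    {τ Mρ Mu : ℝ} (hτ : 0 ≤ τ) (hρb_le : ∀ η ∈ Ioc 0 τ, |ρb η| ≤ Mρ)
    (hub_le : ∀ η ∈ Ioc 0 τ, |ub η| ≤ Mu) (x t : ℝ) :
    IntervalIntegrable (fun η => (x - ub η * (t - η)) * (ρb η * ub η)) volume 0 τ := by
  rw [intervalIntegrable_iff_integrableOn_Ioc_of_le hτ]
  have hlin : MemLp (fun η => t - η) ∞ (volume.restrict (Ioc 0 τ)) :=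
    memLp_top_restrict_of_abs_le (by fun_prop) measurableSet_Ioc (C := |t| + τ)
      fun η hη => (abs_sub t η).trans (by rw [abs_of_pos hη.1]; linarith [hη.2])
  have hρ := memLp_top_restrict_of_abs_le hρb (μ := volume) measurableSet_Ioc hρb_le
  have hu := memLp_top_restrict_of_abs_le hub (μ := volume) measurableSet_Ioc hub_le
  have hw : MemLp (fun η => ρb η * ub η) ∞ (volume.restrict (Ioc 0 τ)) := hu.mul' hρ
  exact (hw.mul' ((memLp_const x).sub (hlin.mul' (r := ∞) hu))).integrable le_top

lemma Gpot_sub_Gpot {τ t : ℝ}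
    (hint : ∀ x, IntervalIntegrable (fun η => (x - ub η * (t - η)) * (ρb η * ub η)) volume 0 τ)
    (x x' : ℝ) :
    Gpot ρb ub τ x t - Gpot ρb ub τ x' t = (x - x') * ∫ η in (0:ℝ)..τ, ρb η * ub η := by
  rw [Gpot, Gpot, ← intervalIntegral.integral_sub (hint x) (hint x'),
    ← intervalIntegral.integral_const_mul]
  congr 1
  ext η
  ring

lemma Gpot_lt_Gpot {τ t x x' : ℝ}
    (hint : ∀ x, IntervalIntegrable (fun η => (x - ub η * (t - η)) * (ρb η * ub η)) volume 0 τ)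
    (hpos : ∀ η ∈ Ioo 0 τ, 0 < ρb η * ub η) (hτ : 0 < τ) (hx : x' < x) :
    Gpot ρb ub τ x' t < Gpot ρb ub τ x t := by
  -- the weight `ρb * ub` is the difference of the integrands at `x = 1` and `x = 0`
  have hw : IntervalIntegrable (fun η => ρb η * ub η) volume 0 τ :=
    ((hint 1).sub (hint 0)).congr fun η _ => by ring
  have hdiff := Gpot_sub_Gpot hint x x'
  have := mul_pos (sub_pos.2 hx) (intervalIntegral.intervalIntegral_pos_of_pos_on hw hpos hτ)
  linarith

lemma Gpot_le_Gpot {τ t x x' : ℝ}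
    (hint : ∀ x, IntervalIntegrable (fun η => (x - ub η * (t - η)) * (ρb η * ub η)) volume 0 τ)
    (hpos : ∀ η ∈ Ioo 0 τ, 0 < ρb η * ub η) (hτ : 0 ≤ τ) (hx : x' ≤ x) :
    Gpot ρb ub τ x' t ≤ Gpot ρb ub τ x t := by
  rcases hτ.eq_or_lt with rfl | hτ
  · simp
  rcases hx.eq_or_lt with rfl | hx
  · rfl
  exact (Gpot_lt_Gpot hint hpos hτ hx).le

end Gpot

theorem stmt3_general
    (ρb ub : ℝ → ℝ)
    (hρbmeas : Measurable ρb) (hubmeas : Measurable ub)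
    (hρbpos : ∀ η, 0 ≤ η → 0 < ρb η)
    (hubpos : ∀ η, 0 ≤ η → 0 < ub η)
    (hρbloc : ∀ K : ℝ, ∃ M : ℝ, ∀ η ∈ Set.Icc (0:ℝ) K, ρb η ≤ M)
    (hubbdd : ∃ M : ℝ, ∀ η, 0 ≤ η → |ub η| ≤ M)
    (Gm : ℝ → ℝ → ℝ)
    (hGm : ∀ x t, 0 ≤ x → 0 ≤ t → IsMinValue (fun τ => Gpot ρb ub τ x t) (Gm x t))
    (t x₁ x₂ : ℝ) (ht : 0 < t) (hx₁ : 0 ≤ x₁) (hx : x₁ < x₂)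
    (heq : Gm x₁ t = Gm x₂ t) :
    (∀ x ∈ Set.Icc x₁ x₂, Gm x t = 0) ∧
    (∀ x ∈ Set.Ioc x₁ x₂,
      MinimizesOn (fun τ => Gpot ρb ub τ x t) 0 ∧
      ∀ τ, MinimizesOn (fun τ => Gpot ρb ub τ x t) τ → τ = 0) := by
  have hint : ∀ τ, 0 ≤ τ → ∀ x, IntervalIntegrable
      (fun η => (x - ub η * (t - η)) * (ρb η * ub η)) volume 0 τ := fun τ hτ x => by
    obtain ⟨Mρ, hMρ⟩ := hρbloc τ
    obtain ⟨Mu, hMu⟩ := hubbdd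
    refine intervalIntegrable_Gpot_integrand hρbmeas hubmeas hτ (Mρ := Mρ) (fun η hη => ?_)
      (fun η hη => hMu η hη.1.le) x t
    rw [abs_of_pos (hρbpos η hη.1.le)]
    exact hMρ η (Ioc_subset_Icc_self hη)
  have hpos : ∀ τ, ∀ η ∈ Ioo 0 τ, 0 < ρb η * ub η := fun τ η hη =>
    mul_pos (hρbpos η hη.1.le) (hubpos η hη.1.le)
  have hGm_mono : ∀ x' x, 0 ≤ x' → x' ≤ x → Gm x' t ≤ Gm x t := fun x' x hx' hle =>
    (hGm x' t hx' ht.le).le_of_forall_le (hGm x t (hx'.trans hle) ht.le)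
      fun τ hτ => Gpot_le_Gpot (hint τ hτ) (hpos τ) hτ hle
  have hGm_const : ∀ x ∈ Icc x₁ x₂, Gm x t = Gm x₁ t := fun x hx' =>
    le_antisymm (heq ▸ hGm_mono x x₂ (hx₁.trans hx'.1) hx'.2) (hGm_mono x₁ x hx₁ hx'.1)
  have hIoc : ∀ x ∈ Ioc x₁ x₂, Gm x t = 0 ∧ MinimizesOn (fun τ => Gpot ρb ub τ x t) 0 ∧
      ∀ τ, MinimizesOn (fun τ => Gpot ρb ub τ x t) τ → τ = 0 := fun x hx' => by
    have hGx := hGm x t (hx₁.trans hx'.1.le) ht.le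
    have huniq : ∀ τ, MinimizesOn (fun τ => Gpot ρb ub τ x t) τ → τ = 0 := fun τ hτ =>
      (hGm x₁ t hx₁ ht.le).eq_zero_of_minimizesOn (hGm_const x (Ioc_subset_Icc_self hx') ▸ hGx)
        (fun τ hτ => Gpot_lt_Gpot (hint τ hτ.le) (hpos τ) hτ hx'.1) hτ
    obtain ⟨hmin, hval⟩ := hGx.minimizesOn_of_forall_minimizesOn_eq huniq
    exact ⟨by simpa using hval.symm, hmin, huniq⟩
  refine ⟨fun x hx' => ?_, fun x hx' => (hIoc x hx').2⟩
  rw [hGm_const x hx', ← hGm_const x₂ ⟨hx.le, le_rfl⟩]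
  exact (hIoc x₂ ⟨hx, le_rfl⟩).1

theorem stmt3
    (ρ0 u0 ρb ub : ℝ → ℝ)
    (hρ0meas : Measurable ρ0) (hu0meas : Measurable u0)
    (hρbmeas : Measurable ρb) (hubmeas : Measurable ub)
    (hρ0pos : ∀ η, 0 ≤ η → 0 < ρ0 η)
    (hρbpos : ∀ η, 0 ≤ η → 0 < ρb η)
    (hubpos : ∀ η, 0 ≤ η → 0 < ub η)
    (hρ0loc : ∀ K : ℝ, ∃ M : ℝ, ∀ η ∈ Set.Icc (0:ℝ) K, ρ0 η ≤ M)
    (hρbloc : ∀ K : ℝ, ∃ M : ℝ, ∀ η ∈ Set.Icc (0:ℝ) K, ρb η ≤ M)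
    (hu0bdd : ∃ M : ℝ, ∀ η, 0 ≤ η → |u0 η| ≤ M)
    (hubbdd : ∃ M : ℝ, ∀ η, 0 ≤ η → |ub η| ≤ M)
    (Gm : ℝ → ℝ → ℝ)
    (hGm : ∀ x t, 0 ≤ x → 0 ≤ t → IsMinValue (fun τ => Gpot ρb ub τ x t) (Gm x t))
    (t x₁ x₂ : ℝ) (ht : 0 < t) (hx₁ : 0 ≤ x₁) (hx : x₁ < x₂)
    (heq : Gm x₁ t = Gm x₂ t) :
    (∀ x ∈ Set.Icc x₁ x₂, Gm x t = 0) ∧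
    (∀ x ∈ Set.Ioc x₁ x₂,
      MinimizesOn (fun τ => Gpot ρb ub τ x t) 0 ∧
      ∀ τ, MinimizesOn (fun τ => Gpot ρb ub τ x t) τ → τ = 0) :=
  stmt3_general ρb ub hρbmeas hubmeas hρbpos hubpos hρbloc hubbdd Gm hGm t x₁ x₂ ht hx₁ hx heq
end
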